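/- Let f, g ∈ S₀(ℝⁿ) be nonnegative functions and let h = f∗g be their convolution. Then for all t > 0, h**(t) ≤ t f**(t) g**(t) + ∫_t^∞ f*(u) g*(u) du. -/

import Mathlib

open MeasureTheory Set ENNReal

/-- The class `S₀(ℝⁿ)`. -/
def MemS0 {n : ℕ} (f : EuclideanSpace ℝ (Fin n) → ℝ) : Prop :=
  Measurable f ∧ ∀ y : ℝ, 0 < y → volume {x | y < |f x|} < ⊤

/-- The nonincreasing rearrangement `f*(t) = inf{y > 0 : λ_f(y) < t}`. -/
noncomputable def rearr {n : ℕ} (f : EuclideanSpace ℝ (Fin n) → ℝ) (t : ℝ) : ℝ :=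
  sInf {y : ℝ | 0 < y ∧ volume {x | y < |f x|} < ENNReal.ofReal t}

/-- The maximal rearrangement `f**(t) = (1/t)∫₀^t f*(u) du` (in the extended reals). -/
noncomputable def rearr2 {n : ℕ} (f : EuclideanSpace ℝ (Fin n) → ℝ) (t : ℝ) : ℝ≥0∞ :=
  (ENNReal.ofReal t)⁻¹ * ∫⁻ u in Ioc (0:ℝ) t, ENNReal.ofReal (rearr f u)

/-!
The layer-cake formula `|f| = ∫₀^∞ 1_{|f| > l} dl` and its analogue for `g` bound `|f ∗ g|`
pointwise by a mixture, over pairs of levels `p = (l, m)`, of convolutions `k_p = 1_{A_l} ∗ 1_{B_m}`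
of indicators of the superlevel sets `A_l = {|f| > l}`, `B_m = {|g| > m}`. The functional `φ ↦ ∫₀ᵗ φ*` is dominated by
`t C + ∫ (|φ| - C)₊` for every `C`, and this bound is sublinear in `|φ|`, so it can be estimated
pair by pair: as `k_p ≤ min(a, b)` and `∫ k_p = a b` with `a = λ_f(l)`, `b = λ_g(m)`, a pair
contributes at most `min(a b, t min(a, b)) ≤ min(a, t) min(b, t) + t (min(a, b) - t)₊`.
Integrated over `(l, m)`, the first term factors into `∫ min(λ_f, t) · ∫ min(λ_g, t)`, each
factor at most `∫₀ᵗ f*`, resp. `∫₀ᵗ g*`; by Fubini the second is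
`t ∫ₜ^∞ |{λ_f ≥ u}| |{λ_g ≥ u}| du ≤ t ∫ₜ^∞ f* g*`. Dividing by `t` gives the inequality.
-/

open Filter Topology

local notation "μ₊" => (volume.restrict (Ioi (0 : ℝ)) : Measure ℝ)

def superlevelSet {α : Type*} (f : α → ℝ) (l : ℝ) : Set α := {x | l < |f x|}

theorem lintegral_Ioi_indicator_superlevelSet {α : Type*} (f : α → ℝ) (x : α) {c : ℝ}
    (hc : 0 ≤ c) :
    ∫⁻ l in Ioi c, (superlevelSet f l).indicator (1 : α → ℝ≥0∞) x = ‖f x‖ₑ - ENNReal.ofReal c := by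
  have hswap : ∀ l, (superlevelSet f l).indicator (1 : α → ℝ≥0∞) x = (Iio |f x|).indicator 1 l :=
    fun _ => rfl
  rw [lintegral_congr hswap, lintegral_indicator_one measurableSet_Iio,
    Measure.restrict_apply measurableSet_Iio, Iio_inter_Ioi, Real.volume_Ioo, ofReal_sub _ hc,
    Real.enorm_eq_ofReal_abs]

theorem lintegral_Ioi_zero_indicator_superlevelSet {α : Type*} (f : α → ℝ) (x : α) :
    ∫⁻ l, (superlevelSet f l).indicator (1 : α → ℝ≥0∞) x ∂μ₊ = ‖f x‖ₑ := by
  simpa using lintegral_Ioi_indicator_superlevelSet f x le_rfl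

section LayerCake

variable {α : Type*} [MeasurableSpace α]

noncomputable def distribution (μ : Measure α) (f : α → ℝ) (l : ℝ) : ℝ≥0∞ :=
  μ (superlevelSet f l)

theorem antitone_distribution (μ : Measure α) (f : α → ℝ) : Antitone (distribution μ f) :=
  fun _ _ hyz => measure_mono fun _ hx => hyz.trans_lt hx

theorem measurable_distribution (μ : Measure α) (f : α → ℝ) : Measurable (distribution μ f) :=
  (antitone_distribution μ f).measurable

theorem measurableSet_superlevelSet {f : α → ℝ} (hf : Measurable f) (l : ℝ) :
    MeasurableSet (superlevelSet f l) :=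
  measurableSet_lt measurable_const hf.abs

theorem Measurable.indicator_superlevelSet {β : Type*} [MeasurableSpace β] {f : α → ℝ}
    (hf : Measurable f) {a : β → ℝ} {b : β → α} (ha : Measurable a) (hb : Measurable b) :
    Measurable fun q => (superlevelSet f (a q)).indicator (1 : α → ℝ≥0∞) (b q) :=
  Measurable.ite (measurableSet_lt ha (hf.comp hb).abs) measurable_const measurable_const

theorem setLIntegral_Ioi_distribution (μ : Measure α) [SFinite μ] {f : α → ℝ} (hf : Measurable f)
    {c : ℝ} (hc : 0 ≤ c) :
    (∫⁻ l in Ioi c, distribution μ f l) = ∫⁻ x, (‖f x‖ₑ - ENNReal.ofReal c) ∂μ := by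
  calc (∫⁻ l in Ioi c, distribution μ f l)
      = ∫⁻ l in Ioi c, ∫⁻ x, (superlevelSet f l).indicator 1 x ∂μ := by
        simp only [distribution, lintegral_indicator_one (measurableSet_superlevelSet hf _)]
    _ = ∫⁻ x, (∫⁻ l in Ioi c, (superlevelSet f l).indicator 1 x) ∂μ :=
        lintegral_lintegral_swap
          (hf.indicator_superlevelSet measurable_fst measurable_snd).aemeasurable
    _ = ∫⁻ x, (‖f x‖ₑ - ENNReal.ofReal c) ∂μ := by
        simp only [lintegral_Ioi_indicator_superlevelSet f _ hc]

end LayerCake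

section Convolution

variable {G : Type*} [MeasurableSpace G] [AddCommGroup G] {μ : Measure G}

theorem lconvolution_indicator_one_le_left {A : Set G} (hA : MeasurableSet A) (B : Set G) (x : G) :
    (A.indicator 1 ⋆ₗ[μ] B.indicator 1) x ≤ μ A :=
  calc (A.indicator 1 ⋆ₗ[μ] B.indicator 1) x ≤ ∫⁻ y, A.indicator 1 y ∂μ :=
        lintegral_mono fun _ => mul_le_of_le_one_right' (indicator_le_self _ _ _)
    _ = μ A := lintegral_indicator_one hA

variable [MeasurableAdd₂ G] [MeasurableNeg G]

theorem lconvolution_indicator_one_le_right [μ.IsAddLeftInvariant] [μ.IsNegInvariant]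
    (A : Set G) {B : Set G} (hB : MeasurableSet B) (x : G) :
    (A.indicator 1 ⋆ₗ[μ] B.indicator 1) x ≤ μ B := by
  rw [lconvolution_comm]
  exact lconvolution_indicator_one_le_left hB A x

theorem lintegral_lconvolution [μ.IsAddLeftInvariant] [SFinite μ] {f g : G → ℝ≥0∞}
    (hf : Measurable f) (hg : Measurable g) :
    ∫⁻ x, (f ⋆ₗ[μ] g) x ∂μ = (∫⁻ x, f x ∂μ) * ∫⁻ x, g x ∂μ := by
  simp only [lconvolution_def]
  rw [lintegral_lintegral_swap (by fun_prop), ← lintegral_mul_const _ hf]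
  refine lintegral_congr fun y => ?_
  rw [lintegral_const_mul (f y) (by fun_prop : Measurable fun x => g (-y + x)),
    lintegral_add_left_eq_self]

theorem lintegral_lconvolution_indicator_one [μ.IsAddLeftInvariant] [SFinite μ] {A B : Set G}
    (hA : MeasurableSet A) (hB : MeasurableSet B) :
    ∫⁻ x, (A.indicator 1 ⋆ₗ[μ] B.indicator 1) x ∂μ = μ A * μ B := by
  rw [lintegral_lconvolution (measurable_one.indicator hA) (measurable_one.indicator hB),
    lintegral_indicator_one hA, lintegral_indicator_one hB]

theorem measurable_lconvolution_indicator_superlevelSet [SFinite μ] {f g : G → ℝ}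
    (hf : Measurable f) (hg : Measurable g) :
    Measurable fun q : (ℝ × ℝ) × G =>
      ((superlevelSet f q.1.1).indicator 1 ⋆ₗ[μ] (superlevelSet g q.1.2).indicator 1) q.2 :=
  Measurable.lintegral_prod_right'
    ((hf.indicator_superlevelSet measurable_fst.fst.fst measurable_snd).mul
      (hg.indicator_superlevelSet measurable_fst.fst.snd
        (measurable_snd.neg.add measurable_fst.snd)))

theorem lconvolution_enorm_eq_lintegral [SFinite μ] {f g : G → ℝ} (hf : Measurable f)
    (hg : Measurable g) (x : G) :
    ((fun y => ‖f y‖ₑ) ⋆ₗ[μ] fun y => ‖g y‖ₑ) x =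
      ∫⁻ p, ((superlevelSet f p.1).indicator 1 ⋆ₗ[μ] (superlevelSet g p.2).indicator 1) x
        ∂μ₊.prod μ₊ := by
  simp only [lconvolution_def]
  calc ∫⁻ y, ‖f y‖ₑ * ‖g (-y + x)‖ₑ ∂μ
      = ∫⁻ y, ∫⁻ p, (superlevelSet f p.1).indicator 1 y
          * (superlevelSet g p.2).indicator 1 (-y + x) ∂μ₊.prod μ₊ ∂μ := by
        refine lintegral_congr fun y => ?_
        have hfy : Measurable fun l => (superlevelSet f l).indicator (1 : G → ℝ≥0∞) y :=
          hf.indicator_superlevelSet measurable_id measurable_const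
        have hgy : Measurable fun l => (superlevelSet g l).indicator (1 : G → ℝ≥0∞) (-y + x) :=
          hg.indicator_superlevelSet measurable_id measurable_const
        rw [lintegral_prod_mul hfy.aemeasurable hgy.aemeasurable,
          lintegral_Ioi_zero_indicator_superlevelSet, lintegral_Ioi_zero_indicator_superlevelSet]
    _ = _ := lintegral_lintegral_swap
        ((hf.indicator_superlevelSet measurable_snd.fst measurable_fst).mul
          (hg.indicator_superlevelSet measurable_snd.snd
            (measurable_fst.neg.add_const x))).aemeasurable

end Convolution

section Rearrangement

variable {n : ℕ} {f : EuclideanSpace ℝ (Fin n) → ℝ}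

theorem rearr_nonneg (f : EuclideanSpace ℝ (Fin n) → ℝ) (u : ℝ) : 0 ≤ rearr f u :=
  Real.sInf_nonneg fun _ hy => hy.1.le

theorem ofReal_le_distribution_of_lt_rearr {u y : ℝ} (hy : 0 < y) (h : y < rearr f u) :
    ENNReal.ofReal u ≤ distribution volume f y := by
  by_contra! hlt
  exact h.not_ge (csInf_le ⟨0, fun _ hs => hs.1.le⟩ ⟨hy, hlt⟩)

theorem exists_distribution_lt (hf : MemS0 f) {u : ℝ} (hu : 0 < u) :
    ∃ y, 0 < y ∧ distribution volume f y < ENNReal.ofReal u := by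
  have hempty : ⋂ y, superlevelSet f y = ∅ :=
    eq_empty_of_forall_notMem fun x hx => lt_irrefl |f x| (mem_iInter.1 hx _)
  have hlim : Tendsto (distribution volume f) atTop (𝓝 0) := by
    have h := tendsto_measure_iInter_atTop (μ := volume)
      (fun y => (measurableSet_superlevelSet hf.1 y).nullMeasurableSet)
      (fun _ _ h _ hx => h.trans_lt hx) ⟨1, (hf.2 1 one_pos).ne⟩
    rwa [hempty, measure_empty] at h
  obtain ⟨y, hlt, hy⟩ :=
    ((hlim.eventually (gt_mem_nhds (ofReal_pos.2 hu))).and (eventually_gt_atTop 0)).exists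
  exact ⟨y, hy, hlt⟩

theorem le_rearr_of_ofReal_le_distribution (hf : MemS0 f) {u y : ℝ} (hu : 0 < u)
    (h : ENNReal.ofReal u ≤ distribution volume f y) : y ≤ rearr f u := by
  obtain ⟨z, hz⟩ := exists_distribution_lt hf hu
  exact le_csInf ⟨z, hz⟩ fun s hs =>
    le_of_not_gt fun hsy => hs.2.not_ge (h.trans (antitone_distribution _ _ hsy.le))

/-- `rearr f` is antitone only where its defining set is nonempty (`sInf ∅ = 0`), so its
superlevel sets are shown to be intervals directly. -/
theorem measurable_rearr (f : EuclideanSpace ℝ (Fin n) → ℝ) : Measurable (rearr f) := by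
  refine measurable_of_Ioi fun y => ?_
  rcases lt_or_ge y 0 with hy | hy
  · have huniv : rearr f ⁻¹' Ioi y = univ :=
      eq_univ_of_forall fun u => hy.trans_le (rearr_nonneg f u)
    exact huniv ▸ MeasurableSet.univ
  refine OrdConnected.measurableSet ⟨fun u₁ h₁ u₂ h₂ u hu => ?_⟩
  have hmono : ∀ {v w : ℝ}, v ≤ w →
      {y | 0 < y ∧ distribution volume f y < ENNReal.ofReal v} ⊆
        {y | 0 < y ∧ distribution volume f y < ENNReal.ofReal w} :=
    fun hvw _ hy => ⟨hy.1, hy.2.trans_le (ofReal_le_ofReal hvw)⟩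
  have hne : {y | 0 < y ∧ distribution volume f y < ENNReal.ofReal u₁}.Nonempty := by
    by_contra hne
    have h₀ : rearr f u₁ = 0 := by
      change sInf {y | 0 < y ∧ distribution volume f y < ENNReal.ofReal u₁} = 0
      rw [not_nonempty_iff_eq_empty.1 hne, Real.sInf_empty]
    exact (h₁.trans_eq h₀).not_ge hy
  exact (mem_Ioi.1 h₂).trans_le
    (csInf_le_csInf ⟨0, fun _ hs => hs.1.le⟩ (hne.mono (hmono hu.1)) (hmono hu.2))

theorem volume_lt_rearr_inter_Ioi_le {y : ℝ} (hy : 0 < y) :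
    volume ({u | y < rearr f u} ∩ Ioi 0) ≤ distribution volume f y := by
  rcases eq_top_or_lt_top (distribution volume f y) with htop | hfin
  · exact htop ▸ le_top
  calc volume ({u | y < rearr f u} ∩ Ioi 0)
      ≤ volume (Ioc 0 (distribution volume f y).toReal) := by
        refine measure_mono fun u ⟨hu, hu₀⟩ => ⟨hu₀, ?_⟩
        exact (ofReal_le_iff_le_toReal hfin.ne).1 (ofReal_le_distribution_of_lt_rearr hy hu)
    _ = distribution volume f y := by rw [Real.volume_Ioc, sub_zero, ofReal_toReal hfin.ne]

theorem min_distribution_le_volume_le_rearr_inter_Ioc (hf : MemS0 f) {l : ℝ} (hl : 0 < l)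
    (t : ℝ) :
    min (distribution volume f l) (ENNReal.ofReal t) ≤ volume ({u | l ≤ rearr f u} ∩ Ioc 0 t) := by
  have hfin : distribution volume f l ≠ ⊤ := (hf.2 l hl).ne
  calc min (distribution volume f l) (ENNReal.ofReal t)
      = volume (Ioc 0 (min t (distribution volume f l).toReal)) := by
        rw [Real.volume_Ioc, sub_zero, ofReal_min, ofReal_toReal hfin, min_comm]
    _ ≤ volume ({u | l ≤ rearr f u} ∩ Ioc 0 t) := by
        refine measure_mono fun u ⟨hu₀, hu⟩ => ⟨?_, hu₀, hu.trans (min_le_left _ _)⟩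
        refine le_rearr_of_ofReal_le_distribution hf hu₀ ?_
        exact (ofReal_le_iff_le_toReal hfin).2 (hu.trans (min_le_right _ _))

theorem volume_le_distribution_inter_Ioi_le (hf : MemS0 f) {u : ℝ} (hu : 0 < u) :
    volume ({l | ENNReal.ofReal u ≤ distribution volume f l} ∩ Ioi 0) ≤
      ENNReal.ofReal (rearr f u) :=
  calc volume ({l | ENNReal.ofReal u ≤ distribution volume f l} ∩ Ioi 0)
      ≤ volume (Ioc 0 (rearr f u)) :=
        measure_mono fun _ ⟨hl, hl₀⟩ => ⟨hl₀, le_rearr_of_ofReal_le_distribution hf hu hl⟩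
    _ = ENNReal.ofReal (rearr f u) := by rw [Real.volume_Ioc, sub_zero]

end Rearrangement

theorem volume_ofReal_le_inter_Ioi (m : ℝ≥0∞) {t : ℝ} (ht : 0 ≤ t) :
    volume ({u : ℝ | ENNReal.ofReal u ≤ m} ∩ Ioi t) = m - ENNReal.ofReal t := by
  rcases eq_top_or_lt_top m with rfl | hm
  · simp [Real.volume_Ioi]
  have hset : {u : ℝ | ENNReal.ofReal u ≤ m} ∩ Ioi t = Ioc t m.toReal := by
    ext u
    simp [ofReal_le_iff_le_toReal hm.ne, and_comm]
  rw [hset, Real.volume_Ioc, ofReal_sub _ ht, ofReal_toReal hm.ne]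

section Integrals

variable {n : ℕ} {f g : EuclideanSpace ℝ (Fin n) → ℝ}

theorem setLIntegral_rearr_le {φ : EuclideanSpace ℝ (Fin n) → ℝ} (hφ : Measurable φ) {t : ℝ}
    (ht : 0 < t) (C : ℝ≥0∞) :
    ∫⁻ u in Ioc 0 t, ENNReal.ofReal (rearr φ u) ≤
      ENNReal.ofReal t * C + ∫⁻ x, (‖φ x‖ₑ - C) := by
  rcases eq_top_or_lt_top C with rfl | hC
  · simp [mul_top, ht]
  obtain ⟨c, hc, rfl⟩ : ∃ c, 0 ≤ c ∧ ENNReal.ofReal c = C :=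
    ⟨C.toReal, toReal_nonneg, ofReal_toReal hC.ne⟩
  rw [lintegral_eq_lintegral_meas_lt _ (ae_of_all _ (rearr_nonneg φ))
      (measurable_rearr φ).aemeasurable,
    ← Ioc_union_Ioi_eq_Ioi hc, lintegral_union measurableSet_Ioi (Ioc_disjoint_Ioi le_rfl)]
  gcongr
  · calc ∫⁻ y in Ioc 0 c, volume.restrict (Ioc 0 t) {u | y < rearr φ u}
        ≤ ∫⁻ _ in Ioc 0 c, ENNReal.ofReal t := lintegral_mono fun _ =>
          (measure_mono (subset_univ _)).trans_eq
            (by rw [Measure.restrict_apply_univ, Real.volume_Ioc, sub_zero])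
      _ = ENNReal.ofReal t * ENNReal.ofReal c := by
          rw [setLIntegral_const, Real.volume_Ioc, sub_zero]
  · calc ∫⁻ y in Ioi c, volume.restrict (Ioc 0 t) {u | y < rearr φ u}
        ≤ ∫⁻ y in Ioi c, distribution volume φ y := by
          refine setLIntegral_mono' measurableSet_Ioi fun y hy => ?_
          rw [Measure.restrict_apply' measurableSet_Ioc]
          exact (measure_mono (inter_subset_inter_right _ Ioc_subset_Ioi_self)).trans
            (volume_lt_rearr_inter_Ioi_le (hc.trans_lt hy))
      _ = ∫⁻ x, (‖φ x‖ₑ - ENNReal.ofReal c) := setLIntegral_Ioi_distribution volume hφ hc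

theorem lintegral_min_distribution_le (hf : MemS0 f) (t : ℝ) :
    ∫⁻ l, min (distribution volume f l) (ENNReal.ofReal t) ∂μ₊ ≤
      ∫⁻ u in Ioc 0 t, ENNReal.ofReal (rearr f u) := by
  rw [lintegral_eq_lintegral_meas_le _ (ae_of_all _ (rearr_nonneg f))
    (measurable_rearr f).aemeasurable]
  refine setLIntegral_mono' measurableSet_Ioi fun l hl => ?_
  rw [Measure.restrict_apply' measurableSet_Ioc]
  exact min_distribution_le_volume_le_rearr_inter_Ioc hf hl t

theorem lintegral_min_distribution_tsub_le (hf : MemS0 f) (hg : MemS0 g) {t : ℝ} (ht : 0 ≤ t) :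
    ∫⁻ p, (min (distribution volume f p.1) (distribution volume g p.2) - ENNReal.ofReal t)
        ∂μ₊.prod μ₊ ≤
      ∫⁻ u in Ioi t, ENNReal.ofReal (rearr f u * rearr g u) := by
  set R : Set ((ℝ × ℝ) × ℝ) := {q | ENNReal.ofReal q.2 ≤ distribution volume f q.1.1 ∧
    ENNReal.ofReal q.2 ≤ distribution volume g q.1.2}
  have hR : MeasurableSet R :=
    (measurableSet_le (measurable_ofReal.comp measurable_snd)
      ((measurable_distribution _ _).comp measurable_fst.fst)).inter
    (measurableSet_le (measurable_ofReal.comp measurable_snd)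
      ((measurable_distribution _ _).comp measurable_fst.snd))
  calc ∫⁻ p, (min (distribution volume f p.1) (distribution volume g p.2) - ENNReal.ofReal t)
        ∂μ₊.prod μ₊
      = ∫⁻ p, volume.restrict (Ioi t) (Prod.mk p ⁻¹' R) ∂μ₊.prod μ₊ := by
        refine lintegral_congr fun p => ?_
        rw [Measure.restrict_apply' measurableSet_Ioi, ← volume_ofReal_le_inter_Ioi _ ht]
        simp [R]
    _ = ∫⁻ u in Ioi t, (μ₊.prod μ₊) ((·, u) ⁻¹' R) := by
        rw [← Measure.prod_apply hR, Measure.prod_apply_symm hR]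
    _ ≤ ∫⁻ u in Ioi t, ENNReal.ofReal (rearr f u * rearr g u) := by
        refine setLIntegral_mono' measurableSet_Ioi fun u hu => ?_
        have hu₀ : 0 < u := ht.trans_lt hu
        have hslice : (·, u) ⁻¹' R = {l | ENNReal.ofReal u ≤ distribution volume f l} ×ˢ
            {l | ENNReal.ofReal u ≤ distribution volume g l} := rfl
        rw [hslice, Measure.prod_prod, Measure.restrict_apply' measurableSet_Ioi,
          Measure.restrict_apply' measurableSet_Ioi, ofReal_mul (rearr_nonneg f u)]
        exact mul_le_mul' (volume_le_distribution_inter_Ioi_le hf hu₀)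
          (volume_le_distribution_inter_Ioi_le hg hu₀)

/-- Sublinearity of the bound of `setLIntegral_rearr_le`: a mixture dominating `|φ|` may be
truncated at a separate level `d p` for each of its components `k p`. -/
theorem setLIntegral_rearr_le_of_le_lintegral {P : Type*} [MeasurableSpace P] {ν : Measure P}
    [SFinite ν] {φ : EuclideanSpace ℝ (Fin n) → ℝ} (hφ : Measurable φ)
    {k : P → EuclideanSpace ℝ (Fin n) → ℝ≥0∞} (hk : Measurable (Function.uncurry k))
    (hφk : ∀ x, ‖φ x‖ₑ ≤ ∫⁻ p, k p x ∂ν) {d : P → ℝ≥0∞} (hd : Measurable d) {t : ℝ}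
    (ht : 0 < t) :
    ∫⁻ u in Ioc 0 t, ENNReal.ofReal (rearr φ u) ≤
      ∫⁻ p, (ENNReal.ofReal t * d p + ∫⁻ x, (k p x - d p)) ∂ν := by
  have hkd : Measurable fun q : EuclideanSpace ℝ (Fin n) × P => k q.2 q.1 - d q.2 :=
    (hk.comp measurable_swap).sub (hd.comp measurable_snd)
  calc ∫⁻ u in Ioc 0 t, ENNReal.ofReal (rearr φ u)
      ≤ ENNReal.ofReal t * ∫⁻ p, d p ∂ν + ∫⁻ x, (‖φ x‖ₑ - ∫⁻ p, d p ∂ν) :=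
        setLIntegral_rearr_le hφ ht _
    _ ≤ ENNReal.ofReal t * ∫⁻ p, d p ∂ν + ∫⁻ x, ∫⁻ p, (k p x - d p) ∂ν := by
        gcongr with x
        exact (tsub_le_tsub_right (hφk x) _).trans (lintegral_sub_le d (k · x) hd)
    _ = ∫⁻ p, (ENNReal.ofReal t * d p + ∫⁻ x, (k p x - d p)) ∂ν := by
        rw [lintegral_lintegral_swap hkd.aemeasurable, lintegral_add_left (hd.const_mul _),
          lintegral_const_mul _ hd]

end Integrals

/-- For a kernel bounded by `min a b` with integral `a * b`, the better of the truncation levels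
`min a b` (which leaves nothing above it) and `0` (which leaves the whole integral). -/
noncomputable def cutLevel (T a b : ℝ≥0∞) : ℝ≥0∞ :=
  if T * min a b ≤ a * b then min a b else 0

theorem measurable_cutLevel {P : Type*} [MeasurableSpace P] {T : ℝ≥0∞} {a b : P → ℝ≥0∞}
    (ha : Measurable a) (hb : Measurable b) :
    Measurable fun p => cutLevel T (a p) (b p) :=
  Measurable.ite (measurableSet_le (measurable_const.mul (ha.min hb)) (ha.mul hb))
    (ha.min hb) measurable_const

theorem mul_cutLevel_add_lintegral_tsub_le {α : Type*} [MeasurableSpace α] {μ : Measure α}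
    {k : α → ℝ≥0∞} {T a b : ℝ≥0∞} (hk : ∀ x, k x ≤ min a b) (hint : ∫⁻ x, k x ∂μ = a * b) :
    T * cutLevel T a b + ∫⁻ x, (k x - cutLevel T a b) ∂μ ≤ min (a * b) (T * min a b) := by
  unfold cutLevel
  split_ifs with h
  · simp [tsub_eq_zero_of_le (hk _), h]
  · simp [hint, (not_le.1 h).le]

theorem min_mul_le_min_mul_min_add_mul_tsub (T a b : ℝ≥0∞) :
    min (a * b) (T * min a b) ≤ min a T * min b T + T * (min a b - T) := by
  rcases le_total (min a b) T with hab | hab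
  · rw [tsub_eq_zero_of_le hab, mul_zero, add_zero]
    rcases le_total a b with h | h
    · rw [min_eq_left h] at hab ⊢
      rw [min_eq_left hab, mul_min, mul_comm T]
    · rw [min_eq_right h] at hab ⊢
      rw [min_eq_left hab, min_mul, mul_comm T]
  · rw [min_eq_right (le_min_iff.1 hab).1, min_eq_right (le_min_iff.1 hab).2, ← mul_add,
      add_tsub_cancel_of_le hab]
    exact min_le_right _ _

theorem setLIntegral_rearr_convolution_le {n : ℕ} {f g : EuclideanSpace ℝ (Fin n) → ℝ}
    (hf : MemS0 f) (hg : MemS0 g) {t : ℝ} (ht : 0 < t) :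
    ∫⁻ u in Ioc 0 t, ENNReal.ofReal (rearr (fun x => ∫ y, f (x - y) * g y) u) ≤
      (∫⁻ u in Ioc 0 t, ENNReal.ofReal (rearr f u)) *
          (∫⁻ u in Ioc 0 t, ENNReal.ofReal (rearr g u)) +
        ENNReal.ofReal t * ∫⁻ u in Ioi t, ENNReal.ofReal (rearr f u * rearr g u) := by
  set T := ENNReal.ofReal t
  set df := distribution volume f
  set dg := distribution volume g
  set k : ℝ × ℝ → EuclideanSpace ℝ (Fin n) → ℝ≥0∞ := fun p =>
    (superlevelSet f p.1).indicator 1 ⋆ₗ (superlevelSet g p.2).indicator 1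
  have hmf : Measurable df := measurable_distribution volume f
  have hmg : Measurable dg := measurable_distribution volume g
  have hconv : Measurable fun x => ∫ y, f (x - y) * g y :=
    (StronglyMeasurable.integral_prod_right' (f := fun q : EuclideanSpace ℝ (Fin n) × _ =>
      f (q.1 - q.2) * g q.2) ((hf.1.comp (measurable_fst.sub measurable_snd)).mul
        (hg.1.comp measurable_snd)).stronglyMeasurable).measurable
  have hconv_le : ∀ x, ‖∫ y, f (x - y) * g y‖ₑ ≤ ∫⁻ p, k p x ∂μ₊.prod μ₊ := fun x =>
    calc ‖∫ y, f (x - y) * g y‖ₑ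
        ≤ ∫⁻ y, ‖f (x - y) * g y‖ₑ := enorm_integral_le_lintegral_enorm _
      _ = ((fun y => ‖g y‖ₑ) ⋆ₗ fun y => ‖f y‖ₑ) x := by
        simp only [lconvolution_def, enorm_mul, neg_add_eq_sub, mul_comm]
      _ = ∫⁻ p, k p x ∂μ₊.prod μ₊ := by
        rw [lconvolution_comm, lconvolution_enorm_eq_lintegral hf.1 hg.1]
  have hk_le : ∀ p x, k p x ≤ min (df p.1) (dg p.2) := fun p x =>
    le_min (lconvolution_indicator_one_le_left (measurableSet_superlevelSet hf.1 _) _ x)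
      (lconvolution_indicator_one_le_right _ (measurableSet_superlevelSet hg.1 _) x)
  have hk_int : ∀ p, ∫⁻ x, k p x = df p.1 * dg p.2 := fun p =>
    lintegral_lconvolution_indicator_one (measurableSet_superlevelSet hf.1 _)
      (measurableSet_superlevelSet hg.1 _)
  have hprod : Measurable fun p : ℝ × ℝ => min (df p.1) T * min (dg p.2) T :=
    ((hmf.comp measurable_fst).min measurable_const).mul
      ((hmg.comp measurable_snd).min measurable_const)
  have htail : Measurable fun p : ℝ × ℝ => min (df p.1) (dg p.2) - T :=
    ((hmf.comp measurable_fst).min (hmg.comp measurable_snd)).sub measurable_const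
  calc ∫⁻ u in Ioc 0 t, ENNReal.ofReal (rearr (fun x => ∫ y, f (x - y) * g y) u)
      ≤ ∫⁻ p, (T * cutLevel T (df p.1) (dg p.2) +
          ∫⁻ x, (k p x - cutLevel T (df p.1) (dg p.2))) ∂μ₊.prod μ₊ :=
        setLIntegral_rearr_le_of_le_lintegral hconv
          (measurable_lconvolution_indicator_superlevelSet hf.1 hg.1) hconv_le
          (measurable_cutLevel (hmf.comp measurable_fst) (hmg.comp measurable_snd)) ht
    _ ≤ ∫⁻ p, min (df p.1 * dg p.2) (T * min (df p.1) (dg p.2)) ∂μ₊.prod μ₊ :=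
        lintegral_mono fun p => mul_cutLevel_add_lintegral_tsub_le (hk_le p) (hk_int p)
    _ ≤ ∫⁻ p, (min (df p.1) T * min (dg p.2) T + T * (min (df p.1) (dg p.2) - T))
          ∂μ₊.prod μ₊ :=
        lintegral_mono fun p => min_mul_le_min_mul_min_add_mul_tsub _ _ _
    _ = (∫⁻ l, min (df l) T ∂μ₊) * (∫⁻ l, min (dg l) T ∂μ₊) +
          T * ∫⁻ p, (min (df p.1) (dg p.2) - T) ∂μ₊.prod μ₊ := by
        rw [lintegral_add_left hprod, lintegral_const_mul T htail,
          lintegral_prod_mul (hmf.min measurable_const).aemeasurable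
            (hmg.min measurable_const).aemeasurable]
    _ ≤ _ := add_le_add
        (mul_le_mul' (lintegral_min_distribution_le hf t) (lintegral_min_distribution_le hg t))
        (mul_le_mul_right (lintegral_min_distribution_tsub_le hf hg ht.le) _)

theorem oneil_inequality_general {n : ℕ} (f g : EuclideanSpace ℝ (Fin n) → ℝ)
    (hf : MemS0 f) (hg : MemS0 g)
    (h : EuclideanSpace ℝ (Fin n) → ℝ) (hh : h = fun x => ∫ y, f (x - y) * g y)
    (t : ℝ) (ht : 0 < t) :
    rearr2 h t ≤ ENNReal.ofReal t * rearr2 f t * rearr2 g t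
      + ∫⁻ u in Ioi t, ENNReal.ofReal (rearr f u * rearr g u) := by
  subst hh
  unfold rearr2
  set T := ENNReal.ofReal t
  set If := ∫⁻ u in Ioc 0 t, ENNReal.ofReal (rearr f u)
  set Ig := ∫⁻ u in Ioc 0 t, ENNReal.ofReal (rearr g u)
  have hT₀ : T ≠ 0 := by simpa [T] using ht
  calc _ ≤ T⁻¹ * (If * Ig + T * ∫⁻ u in Ioi t, ENNReal.ofReal (rearr f u * rearr g u)) :=
        mul_le_mul_right (setLIntegral_rearr_convolution_le hf hg ht) _
    _ = T * (T⁻¹ * If) * (T⁻¹ * Ig) + ∫⁻ u in Ioi t, ENNReal.ofReal (rearr f u * rearr g u) := by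
        rw [mul_add, ← mul_assoc _ T, ENNReal.inv_mul_cancel hT₀ ofReal_ne_top, one_mul,
          show T * (T⁻¹ * If) * (T⁻¹ * Ig) = T * T⁻¹ * (T⁻¹ * (If * Ig)) by ring,
          ENNReal.mul_inv_cancel hT₀ ofReal_ne_top, one_mul]

/-- **O'Neil's inequality.** Let `f, g ∈ S₀(ℝⁿ)` be nonnegative and `h = f∗g`. Then for
all `t > 0`, `h**(t) ≤ t f**(t) g**(t) + ∫_t^∞ f*(u) g*(u) du`. -/
theorem oneil_inequality {n : ℕ} (f g : EuclideanSpace ℝ (Fin n) → ℝ)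
    (hf : MemS0 f) (hg : MemS0 g) (hf0 : ∀ x, 0 ≤ f x) (hg0 : ∀ x, 0 ≤ g x)
    (h : EuclideanSpace ℝ (Fin n) → ℝ) (hh : h = fun x => ∫ y, f (x - y) * g y)
    (t : ℝ) (ht : 0 < t) :
    rearr2 h t ≤ ENNReal.ofReal t * rearr2 f t * rearr2 g t
      + ∫⁻ u in Ioi t, ENNReal.ofReal (rearr f u * rearr g u) :=
  oneil_inequality_general f g hf hg h hh t ht
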